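/- arXiv:1505.04032 — 3 statements merged into one kernel-verified Lean document; each statement's English description precedes it below -/
import Mathlib

section
/- If a coherence measure C satisfies monotonicity under selective incoherent operations on pure states (R(|ψ⟩) ≥ Σ_n p_n R(ψ_n) for Kraus operators of an incoherent operation), and R_I is its convex-roof extension, then R_I satisfies the same monotonicity on mixed states: R_I(ρ) ≥ Σ_n p_n R_I(ρ_n), where ρ_n = K_n ρ K_n†/p_n and p_n = Tr[K_n ρ K_n†]. -/
open Matrix

/-- Intrinsic randomness of a pure state `ψ` (Shannon entropy, in bits, of the
computational-basis outcome distribution `{|ψ i|²}`). -/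
noncomputable def pureR {d : ℕ} (ψ : Fin d → ℂ) : ℝ :=
  -∑ i, ‖ψ i‖ ^ 2 * Real.logb 2 (‖ψ i‖ ^ 2)

/-- `q, ψ` is a pure-state decomposition of `ρ`: nonnegative weights summing to 1,
unit vectors, and `ρ = Σ_e q_e |ψ_e⟩⟨ψ_e|`. -/
def IsDecomp {d : ℕ} (ρ : Matrix (Fin d) (Fin d) ℂ) {m : ℕ}
    (q : Fin m → ℝ) (ψ : Fin m → Fin d → ℂ) : Prop :=
  (∀ e, 0 ≤ q e) ∧ (∑ e, q e = 1) ∧ (∀ e, ∑ i, ‖ψ e i‖ ^ 2 = 1) ∧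
    ρ = ∑ e, (q e : ℂ) • Matrix.vecMulVec (ψ e) (fun i => star (ψ e i))

/-- Convex-roof intrinsic randomness: infimum of the average pure-state randomness
over all pure-state decompositions of `ρ`. -/
noncomputable def RI {d : ℕ} (ρ : Matrix (Fin d) (Fin d) ℂ) : ℝ :=
  sInf { r | ∃ (m : ℕ) (q : Fin m → ℝ) (ψ : Fin m → Fin d → ℂ),
    IsDecomp ρ q ψ ∧ r = ∑ e, q e * pureR (ψ e) }

/-- The rank-one projector `|ψ⟩⟨ψ|` as a matrix. -/
noncomputable def pureProj {d : ℕ} (ψ : Fin d → ℂ) : Matrix (Fin d) (Fin d) ℂ :=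
  Matrix.vecMulVec ψ (fun i => star (ψ i))

/-!
Fix a decomposition `ρ = ∑ₑ qₑ |ψₑ⟩⟨ψₑ|`. Every outcome `Kₙ ρ Kₙᴴ` is then the mixture
`∑ₑ qₑ Kₙ|ψₑ⟩⟨ψₑ|Kₙᴴ` of unnormalised pure states, so convexity of `R_I` gives
`pₙ R_I(ρₙ) ≤ ∑ₑ qₑ pₑₙ R_I(ρₑₙ)`, where `ρₑₙ` is the normalised `Kₙ|ψₑ⟩` and
`pₑₙ = ‖Kₙψₑ‖²`. Summing over `n`, pure-state monotonicity bounds the right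
side by `∑ₑ qₑ R(ψₑ)`, and taking the infimum over decompositions gives `R_I(ρ)`.
-/

section ConvexRoof

variable {d : ℕ}

theorem isDecomp_iff {ρ : Matrix (Fin d) (Fin d) ℂ} {m : ℕ} {q : Fin m → ℝ}
    {ψ : Fin m → Fin d → ℂ} :
    IsDecomp ρ q ψ ↔ (∀ e, 0 ≤ q e) ∧ (∑ e, q e = 1) ∧ (∀ e, ∑ i, ‖ψ e i‖ ^ 2 = 1) ∧
      ρ = ∑ e, (q e : ℂ) • pureProj (ψ e) :=
  Iff.rfl

theorem pureR_nonneg {ψ : Fin d → ℂ} (hψ : ∑ i, ‖ψ i‖ ^ 2 = 1) : 0 ≤ pureR ψ := by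
  rw [pureR, neg_nonneg]
  refine Finset.sum_nonpos fun i _ => mul_nonpos_of_nonneg_of_nonpos (by positivity) ?_
  refine Real.logb_nonpos one_lt_two (by positivity) ?_
  rw [← hψ]
  exact Finset.single_le_sum (f := fun j => ‖ψ j‖ ^ 2) (fun j _ => by positivity)
    (Finset.mem_univ i)

theorem sum_mul_pureR_nonneg {ι : Type*} [Fintype ι] {q : ι → ℝ} {ψ : ι → Fin d → ℂ}
    (hq : ∀ e, 0 ≤ q e) (hψ : ∀ e, ∑ i, ‖ψ e i‖ ^ 2 = 1) : 0 ≤ ∑ e, q e * pureR (ψ e) :=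
  Finset.sum_nonneg fun e _ => mul_nonneg (hq e) (pureR_nonneg (hψ e))

theorem RI_nonneg (ρ : Matrix (Fin d) (Fin d) ℂ) : 0 ≤ RI ρ := by
  refine Real.sInf_nonneg ?_
  rintro _ ⟨m, q, ψ, ⟨hq, -, hψ, -⟩, rfl⟩
  exact sum_mul_pureR_nonneg hq hψ

theorem RI_le_of_decomp {ι : Type*} [Fintype ι] {ρ : Matrix (Fin d) (Fin d) ℂ} {q : ι → ℝ}
    {ψ : ι → Fin d → ℂ} (hq : ∀ e, 0 ≤ q e) (hq1 : ∑ e, q e = 1)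
    (hψ : ∀ e, ∑ i, ‖ψ e i‖ ^ 2 = 1) (hρ : ρ = ∑ e, (q e : ℂ) • pureProj (ψ e)) :
    RI ρ ≤ ∑ e, q e * pureR (ψ e) := by
  let σ := (Fintype.equivFin ι).symm
  have hdec : IsDecomp ρ (q ∘ σ) (ψ ∘ σ) := by
    refine ⟨fun _ => hq _, (σ.sum_comp q).trans hq1, fun _ => hψ _, ?_⟩
    exact hρ.trans (σ.sum_comp fun e => (q e : ℂ) • pureProj (ψ e)).symm
  refine csInf_le ⟨0, ?_⟩ ⟨_, _, _, hdec, (σ.sum_comp fun e => q e * pureR (ψ e)).symm⟩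
  rintro _ ⟨m, q', ψ', ⟨hq', -, hψ', -⟩, rfl⟩
  exact sum_mul_pureR_nonneg hq' hψ'

theorem exists_isDecomp_lt_of_RI_lt {ρ : Matrix (Fin d) (Fin d) ℂ} {m : ℕ} {q : Fin m → ℝ}
    {ψ : Fin m → Fin d → ℂ} (hρ : IsDecomp ρ q ψ) {b : ℝ} (hb : RI ρ < b) :
    ∃ (m : ℕ) (q : Fin m → ℝ) (ψ : Fin m → Fin d → ℂ),
      IsDecomp ρ q ψ ∧ ∑ f, q f * pureR (ψ f) < b := by
  obtain ⟨_, ⟨m, q, ψ, h, rfl⟩, hlt⟩ :=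
    exists_lt_of_csInf_lt (by exact ⟨_, m, q, ψ, hρ, rfl⟩) hb
  exact ⟨m, q, ψ, h, hlt⟩

/-- Glue `ε`-optimal decompositions of the `σ e` into a decomposition of their mixture. -/
theorem RI_sum_smul_le {ι : Type*} [Fintype ι] {w : ι → ℝ} (hw : ∀ e, 0 ≤ w e)
    (hw1 : ∑ e, w e = 1) {σ : ι → Matrix (Fin d) (Fin d) ℂ}
    (hσ : ∀ e, ∃ (m : ℕ) (q : Fin m → ℝ) (ψ : Fin m → Fin d → ℂ), IsDecomp (σ e) q ψ) :
    RI (∑ e, (w e : ℂ) • σ e) ≤ ∑ e, w e * RI (σ e) := by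
  refine le_of_forall_pos_le_add fun ε hε => ?_
  have hnear : ∀ e, ∃ (m : ℕ) (q : Fin m → ℝ) (ψ : Fin m → Fin d → ℂ),
      IsDecomp (σ e) q ψ ∧ ∑ f, q f * pureR (ψ f) < RI (σ e) + ε := fun e => by
    obtain ⟨m, q, ψ, h⟩ := hσ e
    exact exists_isDecomp_lt_of_RI_lt h (lt_add_of_pos_right _ hε)
  choose m q ψ hdec hlt using hnear
  calc RI (∑ e, (w e : ℂ) • σ e)
      ≤ ∑ x : Σ e, Fin (m e), w x.1 * q x.1 x.2 * pureR (ψ x.1 x.2) := by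
        refine RI_le_of_decomp (fun x => mul_nonneg (hw _) ((hdec _).1 _)) ?_
          (fun x => (hdec _).2.2.1 _) ?_
        · simp only [Fintype.sum_sigma, ← Finset.mul_sum, (hdec _).2.1, mul_one, hw1]
        · simp only [Fintype.sum_sigma, (isDecomp_iff.1 (hdec _)).2.2.2, Finset.smul_sum,
            smul_smul, Complex.ofReal_mul]
    _ = ∑ e, w e * ∑ f, q e f * pureR (ψ e f) := by
        simp only [Fintype.sum_sigma, Finset.mul_sum, mul_assoc]
    _ ≤ ∑ e, w e * (RI (σ e) + ε) := by
        gcongr with e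
        · exact hw e
        · exact (hlt e).le
    _ = ∑ e, w e * RI (σ e) + ε := by
        simp only [mul_add, Finset.sum_add_distrib, ← Finset.sum_mul, hw1, one_mul]

end ConvexRoof

section PureProj

variable {d : ℕ}

@[simp]
theorem pureProj_zero : pureProj (0 : Fin d → ℂ) = 0 := by
  simp [pureProj]

theorem trace_pureProj (v : Fin d → ℂ) :
    (pureProj v).trace = ((∑ i, ‖v i‖ ^ 2 : ℝ) : ℂ) := by
  simp [pureProj, trace_vecMulVec, dotProduct, Complex.mul_conj']

theorem pureProj_smul (c : ℂ) (v : Fin d → ℂ) : pureProj (c • v) = (c * star c) • pureProj v := by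
  ext i j
  simp only [pureProj, vecMulVec_apply, Pi.smul_apply, smul_eq_mul, star_mul', Matrix.smul_apply]
  ring

theorem mul_pureProj_mul_conjTranspose {d' : ℕ} (K : Matrix (Fin d') (Fin d) ℂ)
    (v : Fin d → ℂ) : K * pureProj v * Kᴴ = pureProj (K *ᵥ v) := by
  rw [pureProj, pureProj, mul_vecMulVec, vecMulVec_mul]
  exact congrArg _ (star_mulVec K v).symm

theorem sum_norm_sq_pos {v : Fin d → ℂ} (hv : v ≠ 0) : 0 < ∑ i, ‖v i‖ ^ 2 := by
  obtain ⟨i, hi⟩ := Function.ne_iff.1 hv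
  exact Finset.sum_pos' (fun j _ => by positivity)
    ⟨i, Finset.mem_univ i, pow_pos (norm_pos_iff.2 hi) 2⟩

theorem isDecomp_inv_smul_pureProj {v : Fin d → ℂ} (hv : v ≠ 0) :
    IsDecomp (((∑ i, ‖v i‖ ^ 2 : ℝ) : ℂ)⁻¹ • pureProj v) (fun _ : Fin 1 => 1)
      (fun _ => (((√(∑ i, ‖v i‖ ^ 2))⁻¹ : ℝ) : ℂ) • v) := by
  set t := ∑ i, ‖v i‖ ^ 2 with ht
  have htpos : 0 < t := sum_norm_sq_pos hv
  refine isDecomp_iff.2 ⟨fun _ => zero_le_one, by simp, fun _ => ?_, ?_⟩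
  · simp only [Pi.smul_apply, smul_eq_mul, norm_mul, mul_pow, ← Finset.mul_sum, ← ht,
      Complex.norm_real, Real.norm_eq_abs, sq_abs, inv_pow, Real.sq_sqrt htpos.le]
    exact inv_mul_cancel₀ htpos.ne'
  · rw [Fin.sum_univ_one, Complex.ofReal_one, one_smul, pureProj_smul, Complex.star_def,
      Complex.conj_ofReal, ← Complex.ofReal_mul, ← mul_inv, Real.mul_self_sqrt htpos.le,
      Complex.ofReal_inv]

end PureProj

section WeightedRI

variable {d : ℕ}

/-- The paper's `pₙ R_I(ρₙ)`, written in terms of the unnormalised outcome `M = Kₙ ρ Kₙᴴ`,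
with `pₙ = tr M`. -/
noncomputable def weightedRI (M : Matrix (Fin d) (Fin d) ℂ) : ℝ :=
  M.trace.re * RI ((M.trace.re : ℂ)⁻¹ • M)

theorem weightedRI_sum_smul_pureProj_le_of_ne_zero {ι : Type*} [Fintype ι] {q : ι → ℝ}
    (hq : ∀ e, 0 ≤ q e) {v : ι → Fin d → ℂ} (hv : ∀ e, v e ≠ 0) :
    weightedRI (∑ e, (q e : ℂ) • pureProj (v e)) ≤ ∑ e, q e * weightedRI (pureProj (v e)) := by
  obtain ⟨t, ht⟩ : ∃ t : ι → ℝ, t = fun e => ∑ i, ‖v e i‖ ^ 2 := ⟨_, rfl⟩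
  have htr : ∀ e, (pureProj (v e)).trace.re = t e := fun e => by
    rw [ht, trace_pureProj, Complex.ofReal_re]
  have htpos : ∀ e, 0 < t e := fun e => ht ▸ sum_norm_sq_pos (hv e)
  obtain ⟨T, hT⟩ : ∃ T, T = ∑ e, q e * t e := ⟨_, rfl⟩
  have hTtr : (∑ e, (q e : ℂ) • pureProj (v e)).trace.re = T := by
    simp only [trace_sum, trace_smul, Complex.re_sum, smul_eq_mul, Complex.re_ofReal_mul, htr,
      hT]
  simp only [weightedRI, hTtr, htr]
  rcases (hT ▸ Finset.sum_nonneg fun e _ => mul_nonneg (hq e) (htpos e).le : 0 ≤ T).eq_or_lt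
    with hT0 | hTpos
  · rw [← hT0, zero_mul]
    exact Finset.sum_nonneg fun e _ => mul_nonneg (hq e)
      (mul_nonneg (htpos e).le (RI_nonneg _))
  have hmix : (T : ℂ)⁻¹ • ∑ e, (q e : ℂ) • pureProj (v e) =
      ∑ e, ((q e * t e / T : ℝ) : ℂ) • ((t e : ℂ)⁻¹ • pureProj (v e)) := by
    rw [Finset.smul_sum]
    refine Finset.sum_congr rfl fun e _ => ?_
    rw [smul_smul, smul_smul]
    congr 1
    have : (t e : ℂ) ≠ 0 := Complex.ofReal_ne_zero.2 (htpos e).ne'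
    push_cast
    field_simp
  have hconvex := RI_sum_smul_le (w := fun e => q e * t e / T)
    (σ := fun e => (t e : ℂ)⁻¹ • pureProj (v e))
    (fun e => div_nonneg (mul_nonneg (hq e) (htpos e).le) hTpos.le)
    (by rw [← Finset.sum_div, ← hT, div_self hTpos.ne'])
    (fun e => by rw [ht]; exact ⟨1, _, _, isDecomp_inv_smul_pureProj (hv e)⟩)
  calc T * RI ((T : ℂ)⁻¹ • ∑ e, (q e : ℂ) • pureProj (v e))
      ≤ T * ∑ e, q e * t e / T * RI ((t e : ℂ)⁻¹ • pureProj (v e)) := by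
        rw [hmix]
        exact mul_le_mul_of_nonneg_left hconvex hTpos.le
    _ = ∑ e, q e * (t e * RI ((t e : ℂ)⁻¹ • pureProj (v e))) := by
        rw [Finset.mul_sum]
        refine Finset.sum_congr rfl fun e _ => ?_
        field_simp [hTpos.ne']

theorem weightedRI_sum_smul_pureProj_le {ι : Type*} [Fintype ι] {q : ι → ℝ}
    (hq : ∀ e, 0 ≤ q e) (v : ι → Fin d → ℂ) :
    weightedRI (∑ e, (q e : ℂ) • pureProj (v e)) ≤ ∑ e, q e * weightedRI (pureProj (v e)) := by
  classical
  have hsupport : ∀ {β : Type} [AddCommMonoid β] (f : ι → β), (∀ e, v e = 0 → f e = 0) →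
      ∑ e : {e // v e ≠ 0}, f e = ∑ e, f e := by
    intro β _ f hf
    rw [← Fintype.sum_subtype_add_sum_subtype (fun e => v e ≠ 0) f,
      Finset.sum_eq_zero fun (e : {e // ¬v e ≠ 0}) _ => hf e (not_not.1 e.2), add_zero]
  rw [← hsupport _ fun e he => by rw [he, pureProj_zero, smul_zero],
    ← hsupport _ fun e he => by rw [he, pureProj_zero, weightedRI, trace_zero]; simp]
  exact weightedRI_sum_smul_pureProj_le_of_ne_zero (ι := {e // v e ≠ 0}) (fun e => hq e)
    (v := fun e => v e) (fun e => e.2)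

end WeightedRI

theorem stmt9_general (d k : ℕ) (K : Fin k → Matrix (Fin d) (Fin d) ℂ)
    (hpure : ∀ ψ : Fin d → ℂ, (∑ i, ‖ψ i‖ ^ 2 = 1) →
      ∑ n, (K n * pureProj ψ * (K n).conjTranspose).trace.re *
          RI (((K n * pureProj ψ * (K n).conjTranspose).trace.re : ℂ)⁻¹ •
            (K n * pureProj ψ * (K n).conjTranspose)) ≤ pureR ψ)
    (ρ : Matrix (Fin d) (Fin d) ℂ)
    (hρ : ∃ (m : ℕ) (q : Fin m → ℝ) (ψ : Fin m → Fin d → ℂ), IsDecomp ρ q ψ) :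
    ∑ n, (K n * ρ * (K n).conjTranspose).trace.re *
        RI (((K n * ρ * (K n).conjTranspose).trace.re : ℂ)⁻¹ •
          (K n * ρ * (K n).conjTranspose)) ≤ RI ρ := by
  obtain ⟨m₀, q₀, ψ₀, hdec₀⟩ := hρ
  refine le_csInf ⟨_, m₀, q₀, ψ₀, hdec₀, rfl⟩ ?_
  rintro _ ⟨m, q, ψ, hdec, rfl⟩
  obtain ⟨hq, -, hψ, hρq⟩ := isDecomp_iff.1 hdec
  calc ∑ n, weightedRI (K n * ρ * (K n)ᴴ)
      ≤ ∑ n, ∑ e, q e * weightedRI (K n * pureProj (ψ e) * (K n)ᴴ) := by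
        gcongr with n
        simp only [hρq, Finset.mul_sum, Finset.sum_mul, mul_smul_comm, smul_mul_assoc,
          mul_pureProj_mul_conjTranspose]
        exact weightedRI_sum_smul_pureProj_le hq _
    _ = ∑ e, q e * ∑ n, weightedRI (K n * pureProj (ψ e) * (K n)ᴴ) := by
        rw [Finset.sum_comm]
        simp only [Finset.mul_sum]
    _ ≤ ∑ e, q e * pureR (ψ e) := by
        gcongr with e
        · exact hq e
        · exact hpure (ψ e) (hψ e)

/-- If the intrinsic randomness is monotone under a selective incoherent
operation `{K_n}` on pure states, then its convex-roof extension `R_I` is monotone under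
the same selective operation on mixed states:
`R_I(ρ) ≥ Σ_n p_n R_I(ρ_n)` with `p_n = Tr[K_n ρ K_nᴴ]`, `ρ_n = K_n ρ K_nᴴ / p_n`. -/
theorem stmt9 (d k : ℕ) (K : Fin k → Matrix (Fin d) (Fin d) ℂ)
    (hkraus : ∑ n, (K n).conjTranspose * K n = 1)
    (hincoh : ∀ n, ∀ δ : Matrix (Fin d) (Fin d) ℂ, (∀ i j, i ≠ j → δ i j = 0) →
      ∀ i j, i ≠ j → (K n * δ * (K n).conjTranspose) i j = 0)
    (hpure : ∀ ψ : Fin d → ℂ, (∑ i, ‖ψ i‖ ^ 2 = 1) →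
      ∑ n, (K n * pureProj ψ * (K n).conjTranspose).trace.re *
          RI (((K n * pureProj ψ * (K n).conjTranspose).trace.re : ℂ)⁻¹ •
            (K n * pureProj ψ * (K n).conjTranspose)) ≤ pureR ψ)
    (ρ : Matrix (Fin d) (Fin d) ℂ)
    (hρ : ∃ (m : ℕ) (q : Fin m → ℝ) (ψ : Fin m → Fin d → ℂ), IsDecomp ρ q ψ) :
    ∑ n, (K n * ρ * (K n).conjTranspose).trace.re *
        RI (((K n * ρ * (K n).conjTranspose).trace.re : ℂ)⁻¹ •
          (K n * ρ * (K n).conjTranspose)) ≤ RI ρ :=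
  stmt9_general d k K hpure ρ hρ
end

section
/- Conditioned on the Hamming-weight-k outcome, the post-measurement state of |ψ⟩^{⊗N} is the maximally coherent state of dimension C(N,k): P_k |ψ⟩^{⊗N} / ‖P_k |ψ⟩^{⊗N}‖ = (1/√C(N,k)) Σ_{x: wt(x)=k} e^{iθ_k} |x⟩, i.e., all its nonzero amplitudes in the computational basis have equal modulus 1/√C(N,k). -/
open Finset

/-- Hamming weight of a bit string `x : Fin N → Fin 2`. -/
def hamWt {N : ℕ} (x : Fin N → Fin 2) : ℕ :=
  (Finset.univ.filter (fun j => x j = 1)).card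

/-- Amplitude of `|ψ⟩^{⊗N}` (with `|ψ⟩ = α|0⟩+β|1⟩`) on the basis string `x`. -/
noncomputable def amp {N : ℕ} (α β : ℂ) (x : Fin N → Fin 2) : ℂ :=
  ∏ j, (if x j = 0 then α else β)

/-!
Every basis string of weight `k` has the same amplitude `α ^ (N - k) * β ^ k` in `|ψ⟩^{⊗N}`,
nonzero since `α, β ≠ 0`. Projecting onto weight `k` therefore gives a flat vector on the
`C(N,k)` strings of weight `k`, and normalizing a flat vector on `n` coordinates makes every
entry of modulus `1/√n`.
-/

def bitsEquivFinset (ι : Type*) [Fintype ι] [DecidableEq ι] : (ι → Fin 2) ≃ Finset ι where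
  toFun y := univ.filter (y · = 1)
  invFun s j := if j ∈ s then 1 else 0
  left_inv y := by
    funext j
    rcases Fin.exists_fin_two.mp ⟨y j, rfl⟩ with h | h <;> simp [h]
  right_inv s := by
    ext j
    by_cases h : j ∈ s <;> simp [h]

lemma card_filter_hamWt_eq (N k : ℕ) :
    #(univ.filter fun y : Fin N → Fin 2 => hamWt y = k) = N.choose k :=
  calc _ = #(powersetCard k (univ : Finset (Fin N))) :=
        card_equiv (bitsEquivFinset (Fin N)) fun y => by
          simp only [mem_filter, mem_univ, true_and, mem_powersetCard, subset_univ]; rfl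
    _ = N.choose k := by simp [card_powersetCard]

lemma hamWt_eq_card_filter_ne_zero {N : ℕ} (x : Fin N → Fin 2) :
    hamWt x = #(univ.filter fun j => ¬x j = 0) :=
  congrArg card (filter_congr fun j _ => by omega)

lemma amp_eq {N : ℕ} (α β : ℂ) (x : Fin N → Fin 2) :
    amp α β x = α ^ (N - hamWt x) * β ^ hamWt x := by
  have hsplit := card_filter_add_card_filter_not (s := univ) (fun j => x j = 0)
  rw [card_univ, Fintype.card_fin, ← hamWt_eq_card_filter_ne_zero] at hsplit
  rw [amp, prod_ite, prod_const, prod_const, ← hamWt_eq_card_filter_ne_zero,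
    show #(univ.filter fun j => x j = 0) = N - hamWt x by omega]

lemma amp_ne_zero {N : ℕ} {α β : ℂ} (hα : α ≠ 0) (hβ : β ≠ 0) (x : Fin N → Fin 2) :
    amp α β x ≠ 0 := by
  rw [amp_eq]
  exact mul_ne_zero (pow_ne_zero _ hα) (pow_ne_zero _ hβ)

lemma div_sqrt_sum_sq_of_forall_eq {ι : Type*} {s : Finset ι} {f : ι → ℝ} {c : ℝ} (hc : 0 < c)
    (hf : ∀ i ∈ s, f i = c) : c / √(∑ i ∈ s, f i ^ 2) = 1 / √(#s) := by
  rw [sum_congr rfl fun i hi => by rw [hf i hi], sum_const, nsmul_eq_mul,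
    Real.sqrt_mul (Nat.cast_nonneg _), Real.sqrt_sq hc.le, div_mul_cancel_right₀ hc.ne', one_div]

theorem stmt11_general (N k : ℕ) (α β : ℂ) (hα : α ≠ 0) (hβ : β ≠ 0) :
    ∀ x : Fin N → Fin 2, hamWt x = k →
      ‖amp α β x‖ /
          Real.sqrt (∑ y ∈ Finset.univ.filter (fun y : Fin N → Fin 2 => hamWt y = k),
            ‖amp α β y‖ ^ 2) =
        1 / Real.sqrt (N.choose k) := by
  intro x hx
  have hflat : ∀ y ∈ univ.filter (fun y : Fin N → Fin 2 => hamWt y = k),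
      ‖amp α β y‖ = ‖amp α β x‖ := fun y hy => by
    rw [amp_eq, amp_eq, (mem_filter.mp hy).2, hx]
  rw [div_sqrt_sum_sq_of_forall_eq (norm_pos_iff.mpr (amp_ne_zero hα hβ x)) hflat,
    card_filter_hamWt_eq]

/-- Conditioned on the Hamming-weight-`k` outcome, the post-measurement state
of `|ψ⟩^{⊗N}` is maximally coherent of dimension `C(N,k)`: every nonzero amplitude of the
normalized state `P_k|ψ⟩^{⊗N}/‖P_k|ψ⟩^{⊗N}‖` has modulus `1/√C(N,k)`. -/
theorem stmt11 (N k : ℕ) (hk : k ≤ N) (α β : ℂ) (hα : α ≠ 0) (hβ : β ≠ 0)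
    (h : ‖α‖ ^ 2 + ‖β‖ ^ 2 = 1) :
    ∀ x : Fin N → Fin 2, hamWt x = k →
      ‖amp α β x‖ /
          Real.sqrt (∑ y ∈ Finset.univ.filter (fun y : Fin N → Fin 2 => hamWt y = k),
            ‖amp α β y‖ ^ 2) =
        1 / Real.sqrt (N.choose k) :=
  stmt11_general N k α β hα hβ
end

section
/- Uniqueness of the regularized coherence measure on pure states: suppose C is a coherence monotone with C(|Ψ_d⟩) = log₂ d, monotone under incoherent operations, and the regularization C^∞(ρ) = lim_N C(ρ^{⊗N})/N exists. If for a pure state ρ both exact asymptotic distillation at rate R and formation at rate R are possible by incoherent operations (R = S(ρ^diag)), then C^∞(ρ) = R. -/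
/-!
Monotonicity turns the two conversions into the sandwich
`⌊R N⌋₊ ≤ C(ρ^{⊗N}) ≤ ⌈R N⌉₊` for all large `N`, since `C` takes the value `m` on `Ψ₂^{⊗m}`.
Dividing by `N`, both bounds tend to `R`, so the limit `C^∞(ρ)` must be `R`.
-/

open Filter Topology

theorem tendsto_div_of_natFloor_le_of_le_natCeil {u : ℕ → ℝ} {R : ℝ} (hR : 0 ≤ R)
    (hlow : ∀ᶠ N : ℕ in atTop, (⌊R * N⌋₊ : ℝ) ≤ u N)
    (hhigh : ∀ᶠ N : ℕ in atTop, u N ≤ ⌈R * N⌉₊) :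
    Tendsto (fun N : ℕ => u N / N) atTop (𝓝 R) := by
  have hfloor := (tendsto_nat_floor_mul_div_atTop hR).comp tendsto_natCast_atTop_atTop
  have hceil := (tendsto_nat_ceil_mul_div_atTop hR).comp tendsto_natCast_atTop_atTop
  refine tendsto_of_tendsto_of_tendsto_of_le_of_le' hfloor hceil ?_ ?_
  · filter_upwards [hlow] with N hN
    exact div_le_div_of_nonneg_right hN N.cast_nonneg
  · filter_upwards [hhigh] with N hN
    exact div_le_div_of_nonneg_right hN N.cast_nonneg

theorem stmt16_general {State : Type*} (conv : State → State → Prop)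
    (C : State → ℝ)
    (hmono : ∀ a b, conv a b → C b ≤ C a)
    (powρ powΨ : ℕ → State)
    (hΨnorm : ∀ m, C (powΨ m) = (m : ℝ))
    (R : ℝ) (hR : 0 ≤ R)
    (Cinf : ℝ)
    (hlim : Tendsto (fun N : ℕ => C (powρ N) / N) atTop (nhds Cinf))
    (hdistill : ∃ N₀ : ℕ, ∀ N ≥ N₀, conv (powρ N) (powΨ ⌊R * (N:ℝ)⌋₊))
    (hform : ∃ N₀ : ℕ, ∀ N ≥ N₀, conv (powΨ ⌈R * (N:ℝ)⌉₊) (powρ N)) :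
    Cinf = R := by
  obtain ⟨N₁, hd⟩ := hdistill
  obtain ⟨N₂, hf⟩ := hform
  refine tendsto_nhds_unique hlim (tendsto_div_of_natFloor_le_of_le_natCeil hR ?_ ?_)
  · filter_upwards [eventually_ge_atTop N₁] with N hN
    simpa only [hΨnorm] using hmono _ _ (hd N hN)
  · filter_upwards [eventually_ge_atTop N₂] with N hN
    simpa only [hΨnorm] using hmono _ _ (hf N hN)

/-- Uniqueness of the regularized coherence measure on pure states. If `C` is
monotone under incoherent operations (modeled by a convertibility relation `conv`), satisfies
`C(Ψ₂^{⊗m}) = m` (i.e. `C(|Ψ_d⟩) = log₂ d` on maximally coherent states), its regularization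
`C^∞(ρ) = lim_N C(ρ^{⊗N})/N` exists, and a pure state `ρ` is exactly asymptotically
interconvertible with maximally coherent qubits at rate `R` (distillation
`ρ^{⊗N} → Ψ₂^{⊗⌊NR⌋}` and formation `Ψ₂^{⊗⌈NR⌉} → ρ^{⊗N}` for all large `N`), then
`C^∞(ρ) = R`. -/
theorem stmt16 {State : Type*} (conv : State → State → Prop)
    (C : State → ℝ)
    (hmono : ∀ a b, conv a b → C b ≤ C a)
    (ρ Ψ : State)
    (powρ powΨ : ℕ → State)
    (hΨnorm : ∀ m, C (powΨ m) = (m : ℝ))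
    (R : ℝ) (hR : 0 ≤ R)
    (Cinf : ℝ)
    (hlim : Tendsto (fun N : ℕ => C (powρ N) / N) atTop (nhds Cinf))
    (hdistill : ∃ N₀ : ℕ, ∀ N ≥ N₀, conv (powρ N) (powΨ ⌊R * (N:ℝ)⌋₊))
    (hform : ∃ N₀ : ℕ, ∀ N ≥ N₀, conv (powΨ ⌈R * (N:ℝ)⌉₊) (powρ N)) :
    Cinf = R :=
  stmt16_general conv C hmono powρ powΨ hΨnorm R hR Cinf hlim hdistill hform
end
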